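/- Column-sum (L1 matrix measure) identities for the Jacobian of the closed-loop RFM: for x ∈ [0,1]^n define s_j(x) = J(x)_{jj} + Σ_{i ≠ j} |J(x)_{ij}| (the j-th column sum with off-diagonal entries taken in absolute value). Then for every x ∈ [0,1]^n: s_1(x) = −λ_0 k g(λ_n x_n), s_j(x) = 0 for j = 2, …, n−1, and s_n(x) = −λ_n + λ_0 λ_n (1 − x_1) k |g'(λ_n x_n)|. -/

import Mathlib

open scoped BigOperators

/-- Extend a vector `x : Fin n → ℝ` to a function on `ℕ` (zero outside the range). -/
noncomputable def extVec {n : ℕ} (x : Fin n → ℝ) (j : ℕ) : ℝ :=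
  if h : j < n then x ⟨j, h⟩ else 0

/-- The flow from site `j` to site `j+1` (1-based paper indexing of the rates;
`j = 0` is the initiation flow, `j = n` is the exit flow) in the closed-loop
ribosome flow model with negative feedback `u = k g(y)`. Densities are stored
0-based: Lean index `i` corresponds to the paper's site `i+1`. -/
noncomputable def rfmFlow (n : ℕ) (lam : ℕ → ℝ) (k : ℝ) (g : ℝ → ℝ)
    (x : Fin n → ℝ) (j : ℕ) : ℝ :=
  if j = 0 then lam 0 * k * g (lam n * extVec x (n - 1)) * (1 - extVec x 0)
  else if j = n then lam n * extVec x (n - 1)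
  else lam j * extVec x (j - 1) * (1 - extVec x j)

/-- The vector field of the closed-loop RFM with negative feedback. -/
noncomputable def rfmField (n : ℕ) (lam : ℕ → ℝ) (k : ℝ) (g : ℝ → ℝ)
    (x : Fin n → ℝ) : Fin n → ℝ :=
  fun i => rfmFlow n lam k g x i.val - rfmFlow n lam k g x (i.val + 1)

/-- The Jacobian matrix of the closed-loop RFM vector field:
`J(x)_{ij}` is the partial derivative of `f_i` with respect to `x_j` at `x`. -/
noncomputable def rfmJac (n : ℕ) (lam : ℕ → ℝ) (k : ℝ) (g : ℝ → ℝ)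
    (x : Fin n → ℝ) : Matrix (Fin n) (Fin n) ℝ :=
  Matrix.of fun i j =>
    deriv (fun s => rfmField n lam k g (Function.update x j s) i) (x j)

/-- The `j`-th column sum of the Jacobian, with off-diagonal entries taken in
absolute value (the quantity appearing in the `L1` matrix measure). -/
noncomputable def colSum (n : ℕ) (lam : ℕ → ℝ) (k : ℝ) (g : ℝ → ℝ)
    (x : Fin n → ℝ) (j : Fin n) : ℝ :=
  rfmJac n lam k g x j j + ∑ i ∈ Finset.univ.erase j, |rfmJac n lam k g x i j|

section Aux

variable {n : ℕ} {lam : ℕ → ℝ} {k : ℝ} {g : ℝ → ℝ} {x : Fin n → ℝ}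

lemma extVec_lt (x : Fin n → ℝ) (m : ℕ) (h : m < n) : extVec x m = x ⟨m, h⟩ := by
  simp [extVec, h]

lemma extVec_update_self (x : Fin n → ℝ) (j : Fin n) (s : ℝ) :
    extVec (Function.update x j s) j.val = s := by
  simp [extVec, j.isLt]

lemma extVec_update_ne (x : Fin n → ℝ) (j : Fin n) (s : ℝ) (m : ℕ) (h : m ≠ j.val) :
    extVec (Function.update x j s) m = extVec x m := by
  unfold extVec
  split
  · rw [Function.update_of_ne (Fin.ne_of_val_ne h)]
  · rfl

lemma rfmFlow_pos (x : Fin n → ℝ) (m : ℕ) (h1 : 1 ≤ m) (h2 : m ≤ n) :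
    rfmFlow n lam k g x m = lam m * extVec x (m - 1) * (1 - extVec x m) := by
  unfold rfmFlow
  rw [if_neg (by omega : ¬ m = 0)]
  by_cases hm : m = n
  · rw [if_pos hm, hm]
    rw [show extVec x n = 0 by simp [extVec]]
    ring
  · rw [if_neg hm]

lemma extVec_top (x : Fin n → ℝ) : extVec x n = 0 := by simp [extVec]

lemma hasDerivAt_flow_left (x : Fin n → ℝ) (m : ℕ) (h1 : 1 ≤ m) (h2 : m ≤ n) (j : Fin n)
    (hj : j.val = m - 1) (t : ℝ) :
    HasDerivAt (fun s => rfmFlow n lam k g (Function.update x j s) m)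
      (lam m * (1 - extVec x m)) t := by
  have hfun : (fun s => rfmFlow n lam k g (Function.update x j s) m)
      = fun s => lam m * s * (1 - extVec x m) := by
    funext s
    rw [rfmFlow_pos _ m h1 h2, ← hj, extVec_update_self,
      extVec_update_ne x j s m (by omega)]
  rw [hfun]
  simpa using ((hasDerivAt_id t).const_mul (lam m)).mul_const (1 - extVec x m)

lemma hasDerivAt_flow_right (x : Fin n → ℝ) (m : ℕ) (h1 : 1 ≤ m) (h2 : m ≤ n) (j : Fin n)
    (hj : j.val = m) (t : ℝ) :
    HasDerivAt (fun s => rfmFlow n lam k g (Function.update x j s) m)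
      (-(lam m * extVec x (m - 1))) t := by
  have hfun : (fun s => rfmFlow n lam k g (Function.update x j s) m)
      = fun s => lam m * extVec x (m - 1) * (1 - s) := by
    funext s
    have hs : extVec (Function.update x j s) m = s := by
      rw [← hj]; exact extVec_update_self x j s
    rw [rfmFlow_pos _ m h1 h2, hs, extVec_update_ne x j s (m - 1) (by omega)]
  rw [hfun]
  have h0 : HasDerivAt (fun s : ℝ => 1 - s) (-1) t := by
    simpa using (hasDerivAt_id' t).const_sub (1 : ℝ)
  have := h0.const_mul (lam m * extVec x (m - 1))
  refine this.congr_deriv ?_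
  ring

lemma hasDerivAt_flow_pos_none (x : Fin n → ℝ) (m : ℕ) (h1 : 1 ≤ m) (h2 : m ≤ n) (j : Fin n)
    (ha : j.val + 1 ≠ m) (hb : j.val ≠ m) (t : ℝ) :
    HasDerivAt (fun s => rfmFlow n lam k g (Function.update x j s) m) 0 t := by
  have hfun : (fun s => rfmFlow n lam k g (Function.update x j s) m)
      = fun _ => lam m * extVec x (m - 1) * (1 - extVec x m) := by
    funext s
    rw [rfmFlow_pos _ m h1 h2, extVec_update_ne x j s (m - 1) (by omega),
      extVec_update_ne x j s m (by omega)]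
  rw [hfun]
  exact hasDerivAt_const t _

lemma hasDerivAt_flow_zero_first (x : Fin n → ℝ) (hn : 2 ≤ n) (j : Fin n) (hj : j.val = 0)
    (t : ℝ) :
    HasDerivAt (fun s => rfmFlow n lam k g (Function.update x j s) 0)
      (-(lam 0 * k * g (lam n * extVec x (n - 1)))) t := by
  have hfun : (fun s => rfmFlow n lam k g (Function.update x j s) 0)
      = fun s => lam 0 * k * g (lam n * extVec x (n - 1)) * (1 - s) := by
    funext s
    have hs : extVec (Function.update x j s) 0 = s := by
      rw [← hj]; exact extVec_update_self x j s
    unfold rfmFlow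
    rw [if_pos rfl, extVec_update_ne x j s (n - 1) (by omega), hs]
  rw [hfun]
  have h0 : HasDerivAt (fun s : ℝ => 1 - s) (-1) t := by
    simpa using (hasDerivAt_id' t).const_sub (1 : ℝ)
  have := h0.const_mul (lam 0 * k * g (lam n * extVec x (n - 1)))
  refine this.congr_deriv ?_
  ring

lemma hasDerivAt_flow_zero_last (hg : ContDiff ℝ 1 g) (x : Fin n → ℝ) (hn : 2 ≤ n)
    (j : Fin n) (hj : j.val = n - 1) (t : ℝ) :
    HasDerivAt (fun s => rfmFlow n lam k g (Function.update x j s) 0)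
      (lam 0 * k * (deriv g (lam n * t) * lam n) * (1 - extVec x 0)) t := by
  have hfun : (fun s => rfmFlow n lam k g (Function.update x j s) 0)
      = fun s => lam 0 * k * g (lam n * s) * (1 - extVec x 0) := by
    funext s
    have hs : extVec (Function.update x j s) (n - 1) = s := by
      rw [← hj]; exact extVec_update_self x j s
    unfold rfmFlow
    rw [if_pos rfl, extVec_update_ne x j s 0 (by omega), hs]
  rw [hfun]
  have h1 : HasDerivAt (fun s : ℝ => lam n * s) (lam n) t := by
    simpa using (hasDerivAt_id t).const_mul (lam n)
  have h2 : HasDerivAt g (deriv g (lam n * t)) (lam n * t) :=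
    ((hg.differentiable one_ne_zero) (lam n * t)).hasDerivAt
  have h3 : HasDerivAt (fun s : ℝ => g (lam n * s)) (deriv g (lam n * t) * lam n) t :=
    h2.comp t h1
  exact (h3.const_mul (lam 0 * k)).mul_const (1 - extVec x 0)

lemma hasDerivAt_flow_zero_none (x : Fin n → ℝ) (j : Fin n) (h0 : j.val ≠ 0)
    (h1 : j.val ≠ n - 1) (t : ℝ) :
    HasDerivAt (fun s => rfmFlow n lam k g (Function.update x j s) 0) 0 t := by
  have hfun : (fun s => rfmFlow n lam k g (Function.update x j s) 0)
      = fun _ => rfmFlow n lam k g x 0 := by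
    funext s
    unfold rfmFlow
    rw [if_pos rfl, extVec_update_ne x j s (n - 1) (by omega),
      extVec_update_ne x j s 0 (by omega), if_pos rfl]
  rw [hfun]
  exact hasDerivAt_const t _

lemma rfmJac_eq (x : Fin n → ℝ) (i j : Fin n) (d1 d2 : ℝ)
    (h1 : HasDerivAt (fun s => rfmFlow n lam k g (Function.update x j s) i.val) d1 (x j))
    (h2 : HasDerivAt (fun s => rfmFlow n lam k g (Function.update x j s) (i.val + 1)) d2 (x j)) :
    rfmJac n lam k g x i j = d1 - d2 := by
  have h := (h1.sub h2).deriv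
  simp only [rfmJac, rfmField, Matrix.of_apply]
  exact h

lemma rfmJac_eq' (x : Fin n → ℝ) (i j : Fin n) (m1 m2 : ℕ) (e1 : i.val = m1)
    (e2 : m1 + 1 = m2) (d1 d2 : ℝ)
    (h1 : HasDerivAt (fun s => rfmFlow n lam k g (Function.update x j s) m1) d1 (x j))
    (h2 : HasDerivAt (fun s => rfmFlow n lam k g (Function.update x j s) m2) d2 (x j)) :
    rfmJac n lam k g x i j = d1 - d2 := by
  subst e2
  refine rfmJac_eq x i j d1 d2 ?_ ?_
  · rw [e1]; exact h1
  · rw [e1]; exact h2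

end Aux

/-- Column-sum (`L1` matrix measure) identities for the
Jacobian of the closed-loop RFM on the unit cube. (0-based Lean indexing: the
paper's columns `1`, `2,…,n-1`, `n` are `0`, `1,…,n-2`, `n-1`.) -/
theorem rfm_negfb_jacobian_column_sums
    (n : ℕ) (hn : 3 ≤ n) (lam : ℕ → ℝ) (hlam : ∀ i, i ≤ n → 0 < lam i)
    (k : ℝ) (hk : 0 < k)
    (g : ℝ → ℝ) (hg : ContDiff ℝ 1 g) (hgpos : ∀ z : ℝ, 0 ≤ z → 0 < g z)
    (hgder : ∀ z : ℝ, 0 < z → deriv g z < 0)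
    (x : Fin n → ℝ) (hx : ∀ i, x i ∈ Set.Icc (0:ℝ) 1) :
    colSum n lam k g x ⟨0, by omega⟩ =
      -(lam 0 * k * g (lam n * x ⟨n - 1, by omega⟩)) ∧
    (∀ j : Fin n, 1 ≤ j.val → j.val < n - 1 → colSum n lam k g x j = 0) ∧
    colSum n lam k g x ⟨n - 1, by omega⟩ =
      -lam n + lam 0 * lam n * (1 - x ⟨0, by omega⟩) * k *
        |deriv g (lam n * x ⟨n - 1, by omega⟩)| := by
  have hx0 : ∀ m, ∀ h : m < n, 0 ≤ extVec x m := fun m h => by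
    rw [extVec_lt x m h]; exact (hx _).1
  have hx1 : ∀ m, ∀ h : m < n, extVec x m ≤ 1 := fun m h => by
    rw [extVec_lt x m h]; exact (hx _).2
  refine ⟨?_, ?_, ?_⟩
  · -- column 0
    set j0 : Fin n := ⟨0, by omega⟩ with hj0def
    have hj0v : j0.val = 0 := rfl
    have hdiag : rfmJac n lam k g x j0 j0
        = -(lam 0 * k * g (lam n * extVec x (n - 1))) - lam 1 * (1 - extVec x 1) := by
      refine rfmJac_eq' x j0 j0 0 1 hj0v rfl _ _ ?_ ?_
      · exact hasDerivAt_flow_zero_first x (by omega) j0 hj0v _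
      · exact hasDerivAt_flow_left x 1 le_rfl (by omega) j0 (by omega) _
    have hB : rfmJac n lam k g x ⟨1, by omega⟩ j0 = lam 1 * (1 - extVec x 1) - 0 := by
      refine rfmJac_eq' x _ j0 1 2 rfl rfl _ _ ?_ ?_
      · exact hasDerivAt_flow_left x 1 le_rfl (by omega) j0 (by omega) _
      · exact hasDerivAt_flow_pos_none x 2 (by omega) (by omega) j0 (by omega) (by omega) _
    have h1mem : (⟨1, by omega⟩ : Fin n) ∈ Finset.univ.erase j0 :=
      Finset.mem_erase.mpr ⟨Fin.ne_of_val_ne (show (1:ℕ) ≠ 0 by omega), Finset.mem_univ _⟩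
    have hsum : ∑ i ∈ Finset.univ.erase j0, |rfmJac n lam k g x i j0|
        = lam 1 * (1 - extVec x 1) := by
      rw [Finset.sum_eq_single_of_mem _ h1mem ?_, hB, sub_zero,
        abs_of_nonneg (mul_nonneg (hlam 1 (by omega)).le
          (by have := hx1 1 (by omega); linarith))]
      intro i hi hne
      have hmem := Finset.ne_of_mem_erase hi
      have hi0 : i.val ≠ 0 := fun h => hmem (Fin.ext (h.trans hj0v.symm))
      have hi1 : i.val ≠ 1 := fun h => hne (Fin.ext h)
      have hilt : i.val < n := i.isLt
      have hz : rfmJac n lam k g x i j0 = 0 - 0 := by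
        refine rfmJac_eq' x i j0 i.val (i.val + 1) rfl rfl 0 0 ?_ ?_
        · exact hasDerivAt_flow_pos_none x i.val (by omega) (by omega) j0
            (by omega) (by omega) _
        · exact hasDerivAt_flow_pos_none x (i.val + 1) (by omega) (by omega) j0
            (by omega) (by omega) _
      rw [hz, sub_zero, abs_zero]
    simp only [colSum]
    rw [hdiag, hsum, extVec_lt x (n - 1) (by omega)]
    ring
  · -- middle columns
    intro j hj1 hj2
    have hjlt : j.val < n := j.isLt
    obtain ⟨a, hav⟩ : ∃ a : Fin n, a.val = j.val - 1 := ⟨⟨j.val - 1, by omega⟩, rfl⟩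
    obtain ⟨b, hbv⟩ : ∃ b : Fin n, b.val = j.val + 1 := ⟨⟨j.val + 1, by omega⟩, rfl⟩
    have hdiag : rfmJac n lam k g x j j
        = -(lam j.val * extVec x (j.val - 1))
          - lam (j.val + 1) * (1 - extVec x (j.val + 1)) := by
      refine rfmJac_eq' x j j j.val (j.val + 1) rfl rfl _ _ ?_ ?_
      · exact hasDerivAt_flow_right x j.val hj1 (by omega) j rfl _
      · exact hasDerivAt_flow_left x (j.val + 1) (by omega) (by omega) j (by omega) _
    have hA : rfmJac n lam k g x a j
        = 0 - -(lam j.val * extVec x (j.val - 1)) := by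
      refine rfmJac_eq' x a j (j.val - 1) j.val hav (by omega) _ _ ?_ ?_
      · rcases Nat.lt_or_ge 1 j.val with h1 | h1
        · exact hasDerivAt_flow_pos_none x (j.val - 1) (by omega) (by omega) j
            (by omega) (by omega) _
        · rw [show j.val - 1 = 0 by omega]
          exact hasDerivAt_flow_zero_none x j (by omega) (by omega) _
      · exact hasDerivAt_flow_right x j.val hj1 (by omega) j rfl _
    have hB : rfmJac n lam k g x b j
        = lam (j.val + 1) * (1 - extVec x (j.val + 1)) - 0 := by
      refine rfmJac_eq' x b j (j.val + 1) (j.val + 2) hbv rfl _ _ ?_ ?_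
      · exact hasDerivAt_flow_left x (j.val + 1) (by omega) (by omega) j (by omega) _
      · exact hasDerivAt_flow_pos_none x (j.val + 2) (by omega) (by omega) j
          (by omega) (by omega) _
    have hne : a ≠ b := Fin.ne_of_val_ne (by omega)
    have hsub : ({a, b} : Finset (Fin n)) ⊆ Finset.univ.erase j := by
      intro i hi
      simp only [Finset.mem_insert, Finset.mem_singleton] at hi
      refine Finset.mem_erase.mpr ⟨?_, Finset.mem_univ _⟩
      rcases hi with h | h <;> subst h
      · exact Fin.ne_of_val_ne (by omega)
      · exact Fin.ne_of_val_ne (by omega)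
    have hzero : ∀ i ∈ Finset.univ.erase j, i ∉ ({a, b} : Finset (Fin n)) →
        |rfmJac n lam k g x i j| = 0 := by
      intro i hi hni
      simp only [Finset.mem_insert, Finset.mem_singleton, not_or] at hni
      have hij : i.val ≠ j.val := fun h => (Finset.ne_of_mem_erase hi) (Fin.ext h)
      have hia : i.val ≠ j.val - 1 := fun h => hni.1 (Fin.ext (h.trans hav.symm))
      have hib : i.val ≠ j.val + 1 := fun h => hni.2 (Fin.ext (h.trans hbv.symm))
      have hilt : i.val < n := i.isLt
      have hz : rfmJac n lam k g x i j = 0 - 0 := by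
        refine rfmJac_eq' x i j i.val (i.val + 1) rfl rfl 0 0 ?_ ?_
        · rcases Nat.eq_zero_or_pos i.val with h0 | h0
          · rw [h0]
            exact hasDerivAt_flow_zero_none x j (by omega) (by omega) _
          · exact hasDerivAt_flow_pos_none x i.val h0 (by omega) j (by omega) (by omega) _
        · exact hasDerivAt_flow_pos_none x (i.val + 1) (by omega) (by omega) j
            (by omega) (by omega) _
      rw [hz, sub_zero, abs_zero]
    have hpair : ∑ i ∈ Finset.univ.erase j, |rfmJac n lam k g x i j|
        = |rfmJac n lam k g x a j| + |rfmJac n lam k g x b j| := by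
      rw [← Finset.sum_subset hsub hzero, Finset.sum_pair hne]
    simp only [colSum]
    rw [hdiag, hpair, hA, hB, sub_zero, zero_sub, neg_neg,
      abs_of_nonneg (mul_nonneg (hlam j.val (by omega)).le (hx0 (j.val - 1) (by omega))),
      abs_of_nonneg (mul_nonneg (hlam (j.val + 1) (by omega)).le
        (by have := hx1 (j.val + 1) (by omega); linarith))]
    ring
  · -- last column
    set jn : Fin n := ⟨n - 1, by omega⟩ with hjndef
    have hjnv : jn.val = n - 1 := rfl
    obtain ⟨a0, ha0⟩ : ∃ a : Fin n, a.val = 0 := ⟨⟨0, by omega⟩, rfl⟩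
    obtain ⟨a2, ha2⟩ : ∃ a : Fin n, a.val = n - 2 := ⟨⟨n - 2, by omega⟩, rfl⟩
    have hdiag : rfmJac n lam k g x jn jn
        = -(lam (n - 1) * extVec x (n - 1 - 1)) - lam n * (1 - extVec x n) := by
      refine rfmJac_eq' x jn jn (n - 1) n hjnv (by omega) _ _ ?_ ?_
      · exact hasDerivAt_flow_right x (n - 1) (by omega) (by omega) jn hjnv _
      · exact hasDerivAt_flow_left x n (by omega) le_rfl jn hjnv _
    have hr0 : rfmJac n lam k g x a0 jn
        = lam 0 * k * (deriv g (lam n * x jn) * lam n) * (1 - extVec x 0) - 0 := by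
      refine rfmJac_eq' x a0 jn 0 1 ha0 rfl _ _ ?_ ?_
      · exact hasDerivAt_flow_zero_last hg x (by omega) jn hjnv _
      · exact hasDerivAt_flow_pos_none x 1 le_rfl (by omega) jn
          (by rw [hjnv]; omega) (by rw [hjnv]; omega) _
    have hA : rfmJac n lam k g x a2 jn
        = 0 - -(lam (n - 1) * extVec x (n - 1 - 1)) := by
      refine rfmJac_eq' x a2 jn (n - 2) (n - 1) ha2 (by omega) _ _ ?_ ?_
      · exact hasDerivAt_flow_pos_none x (n - 2) (by omega) (by omega) jn
          (by rw [hjnv]; omega) (by rw [hjnv]; omega) _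
      · exact hasDerivAt_flow_right x (n - 1) (by omega) (by omega) jn hjnv _
    have hne : a0 ≠ a2 := Fin.ne_of_val_ne (by omega)
    have hsub : ({a0, a2} : Finset (Fin n)) ⊆ Finset.univ.erase jn := by
      intro i hi
      simp only [Finset.mem_insert, Finset.mem_singleton] at hi
      refine Finset.mem_erase.mpr ⟨?_, Finset.mem_univ _⟩
      rcases hi with h | h <;> subst h
      · exact Fin.ne_of_val_ne (by rw [hjnv]; omega)
      · exact Fin.ne_of_val_ne (by rw [hjnv]; omega)
    have hzero : ∀ i ∈ Finset.univ.erase jn, i ∉ ({a0, a2} : Finset (Fin n)) →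
        |rfmJac n lam k g x i jn| = 0 := by
      intro i hi hni
      simp only [Finset.mem_insert, Finset.mem_singleton, not_or] at hni
      have hij : i.val ≠ n - 1 := fun h => (Finset.ne_of_mem_erase hi)
        (Fin.ext (h.trans hjnv.symm))
      have hia : i.val ≠ 0 := fun h => hni.1 (Fin.ext (h.trans ha0.symm))
      have hib : i.val ≠ n - 2 := fun h => hni.2 (Fin.ext (h.trans ha2.symm))
      have hilt : i.val < n := i.isLt
      have hz : rfmJac n lam k g x i jn = 0 - 0 := by
        refine rfmJac_eq' x i jn i.val (i.val + 1) rfl rfl 0 0 ?_ ?_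
        · exact hasDerivAt_flow_pos_none x i.val (by omega) (by omega) jn
            (by rw [hjnv]; omega) (by rw [hjnv]; omega) _
        · exact hasDerivAt_flow_pos_none x (i.val + 1) (by omega) (by omega) jn
            (by rw [hjnv]; omega) (by rw [hjnv]; omega) _
      rw [hz, sub_zero, abs_zero]
    have hpair : ∑ i ∈ Finset.univ.erase jn, |rfmJac n lam k g x i jn|
        = |rfmJac n lam k g x a0 jn| + |rfmJac n lam k g x a2 jn| := by
      rw [← Finset.sum_subset hsub hzero, Finset.sum_pair hne]
    have habs0 : |rfmJac n lam k g x a0 jn|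
        = lam 0 * k * lam n * (1 - extVec x 0) * |deriv g (lam n * x jn)| := by
      rw [hr0, sub_zero,
        show lam 0 * k * (deriv g (lam n * x jn) * lam n) * (1 - extVec x 0)
          = lam 0 * k * lam n * (1 - extVec x 0) * deriv g (lam n * x jn) by ring,
        abs_mul, abs_of_nonneg]
      have h1 : (0:ℝ) ≤ 1 - extVec x 0 := by have := hx1 0 (by omega); linarith
      have h2 := (hlam 0 (by omega)).le
      have h3 := (hlam n le_rfl).le
      positivity
    have habsA : |rfmJac n lam k g x a2 jn|
        = lam (n - 1) * extVec x (n - 1 - 1) := by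
      rw [hA, zero_sub, neg_neg,
        abs_of_nonneg (mul_nonneg (hlam (n - 1) (by omega)).le
          (hx0 (n - 1 - 1) (by omega)))]
    simp only [colSum]
    rw [hdiag, hpair, habs0, habsA, extVec_top, extVec_lt x 0 (by omega)]
    have hxjn : x jn = x ⟨n - 1, by omega⟩ := rfl
    rw [hxjn]
    ring
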